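/- Let A, L ∈ ℝ^{k×k} and let a ∈ ℝ^k be the vector of columnwise maxima of A, a_j = max_i A_{ij}. Then max over Q in the simplex of nonnegative k×k matrices with entries summing to 1 of [ ⟨Q, A⟩ + min_{p ∈ Δ(Fin k)} pᵀ L (Qᵀ𝟙) ] equals max over r ∈ Δ(Fin k) of [ aᵀr + min_{p ∈ Δ(Fin k)} pᵀ L r ]. That is, the per-node inner optimization over the joint edge matrix Q reduces to an optimization over the node marginal r = Qᵀ𝟙 with the class-based potential vector a. -/

import Mathlib

/-!
Bounding each entry of column `j` of `A` by its maximum `a j` gives `⟨Q, A⟩ ≤ aᵀ(Qᵀ𝟙)`, and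
conversely every `r ∈ Δ` is the column-sum vector of the matrix that puts the mass `r j` on a
row where column `j` of `A` is maximal, for which equality holds. Hence the two suprema agree
after adding any function of the marginal that is bounded above on `Δ`, here
`r ↦ min_{p ∈ Δ} pᵀ L r`.
-/

open Finset

namespace Real

variable {α β : Type*} {P : α → Prop} {R : β → Prop} {f : α → ℝ} {g : β → ℝ}

lemma bddAbove_range_biSup (hg : BddAbove (g '' {y | R y})) :
    BddAbove (Set.range fun y => ⨆ (_ : R y), g y) := by
  obtain ⟨b, hb⟩ := hg
  refine ⟨max b 0, Set.forall_mem_range.2 fun y => Real.iSup_le (fun hy => ?_) (le_max_right _ _)⟩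
  exact (hb ⟨y, hy, rfl⟩).trans (le_max_left _ _)

/-- `hR` makes the right-hand side absorb the junk value `0` taken by `⨆ (_ : P x), f x` when
`¬P x`. -/
lemma biSup_le_biSup_of_forall_exists_le (hg : BddAbove (g '' {y | R y})) (hR : ∃ y, ¬R y)
    (h : ∀ x, P x → ∃ y, R y ∧ f x ≤ g y) :
    (⨆ (x) (_ : P x), f x) ≤ ⨆ (y) (_ : R y), g y := by
  have hnonneg : 0 ≤ ⨆ (y) (_ : R y), g y :=
    Real.iSup_nonneg' (hR.imp fun y hy => by simp [hy])
  refine Real.iSup_le (fun x => Real.iSup_le (fun hx => ?_) hnonneg) hnonneg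
  obtain ⟨y, hy, hfg⟩ := h x hx
  calc f x ≤ g y := hfg
    _ = ⨆ (_ : R y), g y := (ciSup_pos (f := fun _ => g y) hy).symm
    _ ≤ _ := le_ciSup (bddAbove_range_biSup hg) y

end Real

section MarginalReduction

variable {ι κ : Type*} [Fintype ι] [Fintype κ]

lemma zero_notMem_stdSimplex : (0 : κ → ℝ) ∉ stdSimplex ℝ κ :=
  fun h => by simpa using h.2

lemma colSum_mem_stdSimplex {Q : Matrix ι κ ℝ}
    (hQ : (∀ i j, 0 ≤ Q i j) ∧ ∑ i, ∑ j, Q i j = 1) :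
    (fun j => ∑ i, Q i j) ∈ stdSimplex ℝ κ :=
  ⟨fun j => sum_nonneg fun i _ => hQ.1 i j, by rw [sum_comm]; exact hQ.2⟩

lemma sum_mul_le_sum_iSup_mul_colSum (A : Matrix ι κ ℝ) {Q : Matrix ι κ ℝ}
    (hQ : ∀ i j, 0 ≤ Q i j) :
    ∑ i, ∑ j, Q i j * A i j ≤ ∑ j, (⨆ i, A i j) * ∑ i, Q i j := by
  rw [sum_comm]
  refine sum_le_sum fun j _ => ?_
  rw [mul_sum]
  refine sum_le_sum fun i _ => ?_
  rw [mul_comm]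
  exact mul_le_mul_of_nonneg_right
    (le_ciSup (f := fun i => A i j) (Finite.bddAbove_range _) i) (hQ i j)

lemma exists_colSum_eq_and_sum_mul_eq (A : Matrix ι κ ℝ)
    (hmax : ∀ j, ∃ i, ∀ i', A i' j ≤ A i j) {r : κ → ℝ} (hr : r ∈ stdSimplex ℝ κ) :
    ∃ Q : Matrix ι κ ℝ, ((∀ i j, 0 ≤ Q i j) ∧ ∑ i, ∑ j, Q i j = 1) ∧
      (fun j => ∑ i, Q i j) = r ∧ ∑ i, ∑ j, Q i j * A i j = ∑ j, (⨆ i, A i j) * r j := by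
  classical
  choose m hm using hmax
  have hcol : ∀ j, ∑ i, (if i = m j then r j else 0) = r j := by simp
  have hsup : ∀ j, (⨆ i, A i j) = A (m j) j := fun j =>
    haveI : Nonempty ι := ⟨m j⟩
    le_antisymm (ciSup_le (hm j)) (le_ciSup (f := fun i => A i j) (Finite.bddAbove_range _) (m j))
  refine ⟨fun i j => if i = m j then r j else 0, ⟨fun i j => ?_, ?_⟩, funext hcol, ?_⟩
  · dsimp only
    split_ifs
    exacts [hr.1 j, le_rfl]
  · rw [sum_comm]
    simpa only [hcol] using hr.2
  · rw [sum_comm]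
    simp [hsup, mul_comm]

theorem biSup_sum_mul_add_colSum_eq_biSup_stdSimplex (A : Matrix ι κ ℝ)
    (hmax : ∀ j, ∃ i, ∀ i', A i' j ≤ A i j) (ψ : (κ → ℝ) → ℝ)
    (hψ : BddAbove (ψ '' stdSimplex ℝ κ)) :
    (⨆ (Q : Matrix ι κ ℝ) (_ : (∀ i j, 0 ≤ Q i j) ∧ ∑ i, ∑ j, Q i j = 1),
        (∑ i, ∑ j, Q i j * A i j) + ψ (fun j => ∑ i, Q i j))
      = ⨆ (r : κ → ℝ) (_ : r ∈ stdSimplex ℝ κ), (∑ j, (⨆ i, A i j) * r j) + ψ r := by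
  set G : (κ → ℝ) → ℝ := fun r => (∑ j, (⨆ i, A i j) * r j) + ψ r
  have hG : BddAbove (G '' stdSimplex ℝ κ) := by
    obtain ⟨c, hc⟩ := (isCompact_stdSimplex ℝ κ).bddAbove_image
      (f := fun r : κ → ℝ => ∑ j, (⨆ i, A i j) * r j) (by fun_prop)
    obtain ⟨b, hb⟩ := hψ
    exact ⟨c + b, by rintro _ ⟨r, hr, rfl⟩; exact add_le_add (hc ⟨r, hr, rfl⟩) (hb ⟨r, hr, rfl⟩)⟩
  have hle : ∀ Q : Matrix ι κ ℝ, (∀ i j, 0 ≤ Q i j) →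
      (∑ i, ∑ j, Q i j * A i j) + ψ (fun j => ∑ i, Q i j) ≤ G (fun j => ∑ i, Q i j) :=
    fun Q hQ => add_le_add_left (sum_mul_le_sum_iSup_mul_colSum A hQ) _
  apply le_antisymm
  · exact Real.biSup_le_biSup_of_forall_exists_le hG ⟨0, zero_notMem_stdSimplex⟩
      fun Q hQ => ⟨_, colSum_mem_stdSimplex hQ, hle Q hQ.1⟩
  · refine Real.biSup_le_biSup_of_forall_exists_le ?_ ⟨0, by simp⟩ fun r hr => ?_
    · obtain ⟨b, hb⟩ := hG
      refine ⟨b, ?_⟩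
      rintro _ ⟨Q, hQ, rfl⟩
      exact (hle Q hQ.1).trans (hb ⟨_, colSum_mem_stdSimplex hQ, rfl⟩)
    · obtain ⟨Q, hQ, hcol, hsum⟩ := exists_colSum_eq_and_sum_mul_eq A hmax hr
      exact ⟨Q, hQ, by rw [hsum, hcol]⟩

end MarginalReduction

/-- The per-node inner optimization over the joint edge matrix `Q` reduces to an
optimization over the node marginal `r = Qᵀ𝟙` with the class-based potential vector
`a` of columnwise maxima of `A`:
`max_{Q ∈ Δ} [⟨Q,A⟩ + min_{p∈Δ(Fin k)} pᵀ L (Qᵀ𝟙)]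
  = max_{r ∈ Δ(Fin k)} [aᵀr + min_{p∈Δ(Fin k)} pᵀ L r]`. -/
theorem inner_optimization_marginal_reduction {k : ℕ}
    (A L : Matrix (Fin k) (Fin k) ℝ) :
    (⨆ (Q : Matrix (Fin k) (Fin k) ℝ)
        (_ : (∀ i j, 0 ≤ Q i j) ∧ ∑ i, ∑ j, Q i j = 1),
        (∑ i, ∑ j, Q i j * A i j)
          + ⨅ (p : Fin k → ℝ) (_ : p ∈ stdSimplex ℝ (Fin k)),
              ∑ a, ∑ b, p a * L a b * (∑ i, Q i b))
      = ⨆ (r : Fin k → ℝ) (_ : r ∈ stdSimplex ℝ (Fin k)),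
          (∑ j, (⨆ i, A i j) * r j)
            + ⨅ (p : Fin k → ℝ) (_ : p ∈ stdSimplex ℝ (Fin k)),
                ∑ a, ∑ b, p a * L a b * r b := by
  have hmax : ∀ j : Fin k, ∃ i, ∀ i', A i' j ≤ A i j := fun j =>
    haveI : Nonempty (Fin k) := ⟨j⟩
    Finite.exists_max fun i => A i j
  refine biSup_sum_mul_add_colSum_eq_biSup_stdSimplex A hmax
    (fun r => ⨅ (p : Fin k → ℝ) (_ : p ∈ stdSimplex ℝ (Fin k)), ∑ a, ∑ b, p a * L a b * r b)
    ⟨0, ?_⟩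
  rintro _ ⟨r, -, rfl⟩
  -- `p = 0` lies outside the simplex and contributes the junk value `0` to the infimum.
  exact Real.iInf_nonpos' ⟨0, by simp [zero_notMem_stdSimplex]⟩
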